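/- Let ξ₁,...,ξ_d be i.i.d. standard Gaussian, σ > 0, 1 ≤ s < d, a > 0, and let θ ∈ ℝ^d have exactly s nonzero components, each satisfying θ_j ≥ a. Define X_j = θ_j + σξ_j, the threshold t = a/2 + (σ²/a)·log(d/s - 1), the selector η̂⁺_j = 1{X_j ≥ t}, and η_j = 1{θ_j ≠ 0}. Then (1/s)·E[Σ_{j=1}^d |η̂⁺_j - η_j|] ≤ (d/s - 1)·Φ(-t/σ) + Φ((t-a)/σ), and the right-hand side equals Ψ₊(d,s,a) = (d/s-1)·Φ(-a/(2σ) - (σ/a)·log(d/s-1)) + Φ(-a/(2σ) + (σ/a)·log(d/s-1)). -/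

import Mathlib

open MeasureTheory ProbabilityTheory

/-- The standard Gaussian cumulative distribution function. -/
noncomputable def Phi (x : ℝ) : ℝ :=
  (Real.sqrt (2 * Real.pi))⁻¹ * ∫ u in Set.Iic x, Real.exp (-u ^ 2 / 2)

/-- Minimax risk expression for the one-sided sparsity class `Θ_d⁺(s,a)`. -/
noncomputable def PsiPlus (d s : ℕ) (a σ : ℝ) : ℝ :=
  ((d : ℝ) / s - 1) * Phi (-(a / (2 * σ)) - (σ / a) * Real.log ((d : ℝ) / s - 1))
    + Phi (-(a / (2 * σ)) + (σ / a) * Real.log ((d : ℝ) / s - 1))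

/-- The law of the observation vector `X = θ + σξ` with i.i.d. standard Gaussian `ξ_j`:
the product of Gaussian measures `N(θ_j, σ²)`. -/
noncomputable def Pmodel (d : ℕ) (σ : ℝ) (θ : Fin d → ℝ) : Measure (Fin d → ℝ) :=
  Measure.pi fun j => gaussianReal (θ j) (Real.toNNReal (σ ^ 2))

/-!
The Hamming loss splits over coordinates into indicators of error events: a miss `X_j < t` for
`j ∈ S` and a false discovery `X_j ≥ t` for `j ∉ S`. After standardization a false discovery has
probability `Φ(-t/σ)` and a miss has probability `Φ((t - θ_j)/σ) ≤ Φ((t - a)/σ)`, since `θ_j ≥ a`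
and `Φ` is monotone. Summing over the `d - s` null and `s` signal coordinates gives the bound, and
substituting `t` gives `Ψ₊`.
-/

open Set

lemma Phi_eq_gaussianReal_real_Iic (z : ℝ) : Phi z = (gaussianReal 0 1).real (Iic z) := by
  rw [measureReal_def, gaussianReal_apply_eq_integral 0 one_ne_zero,
    ENNReal.toReal_ofReal (integral_nonneg fun x => gaussianPDFReal_nonneg _ _ _),
    Phi, ← integral_const_mul]
  simp [gaussianPDFReal]

lemma Phi_mono : Monotone Phi := fun x y hxy => by
  simpa only [Phi_eq_gaussianReal_real_Iic] using measureReal_mono (Iic_subset_Iic.mpr hxy)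

lemma gaussianReal_real_Ici_zero_one (z : ℝ) : (gaussianReal 0 1).real (Ici z) = Phi (-z) := by
  have hsymm := gaussianReal_map_neg (μ := 0) (v := 1)
  rw [neg_zero] at hsymm
  rw [Phi_eq_gaussianReal_real_Iic, ← hsymm, map_measureReal_apply measurable_neg measurableSet_Iic]
  congr 1
  ext y
  simp

lemma gaussianReal_map_standardize (m : ℝ) {σ : ℝ} (hσ : σ ≠ 0) :
    (gaussianReal m (σ ^ 2).toNNReal).map (fun y => (y - m) / σ) = gaussianReal 0 1 := by
  have : (fun y => (y - m) / σ) = (· / σ) ∘ (· - m) := rfl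
  rw [this, ← Measure.map_map (by fun_prop) (by fun_prop), gaussianReal_map_sub_const,
    gaussianReal_map_div_const, sub_self, zero_div]
  congr 1
  ext
  simp [Real.coe_toNNReal _ (sq_nonneg σ), hσ]

lemma gaussianReal_real_Iic {σ : ℝ} (hσ : 0 < σ) (m x : ℝ) :
    (gaussianReal m (σ ^ 2).toNNReal).real (Iic x) = Phi ((x - m) / σ) := by
  rw [Phi_eq_gaussianReal_real_Iic, ← gaussianReal_map_standardize m hσ.ne',
    map_measureReal_apply (by fun_prop) measurableSet_Iic]
  congr 1
  ext y
  simp [div_le_div_iff_of_pos_right hσ]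

lemma gaussianReal_real_Iio {σ : ℝ} (hσ : 0 < σ) (m x : ℝ) :
    (gaussianReal m (σ ^ 2).toNNReal).real (Iio x) = Phi ((x - m) / σ) := by
  have : NullSingletonClass (gaussianReal m (σ ^ 2).toNNReal) := by
    apply nullSingletonClass_gaussianReal; positivity
  rw [← gaussianReal_real_Iic hσ, measureReal_congr Iio_ae_eq_Iic]

lemma gaussianReal_real_Ici {σ : ℝ} (hσ : 0 < σ) (m x : ℝ) :
    (gaussianReal m (σ ^ 2).toNNReal).real (Ici x) = Phi (-((x - m) / σ)) := by
  rw [← gaussianReal_real_Ici_zero_one, ← gaussianReal_map_standardize m hσ.ne',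
    map_measureReal_apply (by fun_prop) measurableSet_Ici]
  congr 1
  ext y
  simp [div_le_div_iff_of_pos_right hσ]

lemma gaussianReal_real_ite_Iio_Ici_le {σ a m : ℝ} (hσ : 0 < σ) (hm : m ≠ 0 → a ≤ m) (t : ℝ) :
    (gaussianReal m (σ ^ 2).toNNReal).real (if m ≠ 0 then Iio t else Ici t)
      ≤ if m ≠ 0 then Phi ((t - a) / σ) else Phi (-(t / σ)) := by
  split_ifs with h
  · rw [gaussianReal_real_Iio hσ]
    exact Phi_mono (div_le_div_of_nonneg_right (by linarith [hm h]) hσ.le)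
  · rw [not_not.mp h, gaussianReal_real_Ici hσ, sub_zero]

lemma abs_ite_le_sub_ite_eq_indicator (t y : ℝ) (p : Prop) [Decidable p] :
    |(if t ≤ y then (1 : ℝ) else 0) - (if p then 1 else 0)|
      = (if p then Iio t else Ici t).indicator 1 y := by
  by_cases hp : p <;> by_cases hy : t ≤ y <;> simp [hp, hy, lt_iff_not_ge]

lemma integral_sum_indicator_comp_eval {ι : Type*} [Fintype ι] {X : ι → Type*}
    [∀ i, MeasurableSpace (X i)] (μ : ∀ i, Measure (X i)) [∀ i, IsProbabilityMeasure (μ i)]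
    {E : ∀ i, Set (X i)} (hE : ∀ i, MeasurableSet (E i)) :
    ∫ x, ∑ i, (E i).indicator 1 (x i) ∂Measure.pi μ = ∑ i, (μ i).real (E i) := by
  have hint i : Integrable ((E i).indicator (1 : X i → ℝ)) (μ i) :=
    (integrable_const 1).indicator (hE i)
  rw [integral_finsetSum _ fun i _ => integrable_comp_eval (hint i)]
  refine Finset.sum_congr rfl fun i _ => ?_
  rw [integral_comp_eval (hint i).aestronglyMeasurable, integral_indicator_one (hE i)]

lemma Fintype.sum_ite_eq_card_filter {ι R : Type*} [Fintype ι] [Ring R] (p : ι → Prop)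
    [DecidablePred p] (A B : R) :
    ∑ i, (if p i then A else B)
      = (Finset.univ.filter p).card * A
        + ((Fintype.card ι : R) - (Finset.univ.filter p).card) * B := by
  have hcard := Finset.card_filter_add_card_filter_not (s := Finset.univ) (p := p)
  rw [Finset.sum_ite, Finset.sum_const, Finset.sum_const, nsmul_eq_mul, nsmul_eq_mul,
    ← Finset.card_univ, ← hcard, Nat.cast_add, add_sub_cancel_left]

theorem risk_bound_one_sided (d s : ℕ) (hs : 1 ≤ s) (a σ : ℝ)
    (ha : 0 < a) (hσ : 0 < σ) (θ : Fin d → ℝ)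
    (hcard : (Finset.univ.filter fun j => θ j ≠ 0).card = s)
    (hθ : ∀ j, θ j ≠ 0 → a ≤ θ j)
    (t : ℝ) (ht : t = a / 2 + σ ^ 2 / a * Real.log ((d : ℝ) / s - 1)) :
    (1 / (s : ℝ)) * ∫ x, (∑ j, |(if t ≤ x j then (1 : ℝ) else 0)
        - (if θ j ≠ 0 then (1 : ℝ) else 0)|) ∂(Pmodel d σ θ)
      ≤ ((d : ℝ) / s - 1) * Phi (-(t / σ)) + Phi ((t - a) / σ)
    ∧ ((d : ℝ) / s - 1) * Phi (-(t / σ)) + Phi ((t - a) / σ) = PsiPlus d s a σ := by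
  have hs0 : (0 : ℝ) < s := by exact_mod_cast hs
  have hrisk : ∫ x, (∑ j, |(if t ≤ x j then (1 : ℝ) else 0)
        - (if θ j ≠ 0 then (1 : ℝ) else 0)|) ∂(Pmodel d σ θ)
      = ∑ j, (gaussianReal (θ j) (σ ^ 2).toNNReal).real (if θ j ≠ 0 then Iio t else Ici t) := by
    simp_rw [abs_ite_le_sub_ite_eq_indicator]
    exact integral_sum_indicator_comp_eval _ fun j => by
      split_ifs
      exacts [measurableSet_Iio, measurableSet_Ici]
  refine ⟨?_, ?_⟩
  · calc (1 / (s : ℝ)) * ∫ x, (∑ j, |(if t ≤ x j then (1 : ℝ) else 0)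
          - (if θ j ≠ 0 then (1 : ℝ) else 0)|) ∂(Pmodel d σ θ)
        ≤ (1 / (s : ℝ)) * ∑ j, (if θ j ≠ 0 then Phi ((t - a) / σ) else Phi (-(t / σ))) := by
          rw [hrisk]
          gcongr with j
          exact gaussianReal_real_ite_Iio_Ici_le hσ (hθ j) t
      _ = ((d : ℝ) / s - 1) * Phi (-(t / σ)) + Phi ((t - a) / σ) := by
          rw [Fintype.sum_ite_eq_card_filter, hcard, Fintype.card_fin]
          field_simp
          ring
  · rw [PsiPlus, ht]
    congr 3 <;> field_simp <;> ring
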